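/- Let X be a set and ≽ a binary relation on X. The transitive closure of ≽ is an extension of ≽ if and only if ≽ is acyclic. -/
import Mathlib


/-- The strict part of a binary relation: `x ≻ y` iff `x ≽ y` and not `y ≽ x`. -/
def StrictRel {X : Type*} (R : X → X → Prop) (x y : X) : Prop := R x y ∧ ¬ R y x

/-- `R` is `M`-coherent: every `ω ∈ M` preserves the weak and the strict relation. -/
def Coherent {X : Type*} (M : Set (X → X)) (R : X → X → Prop) : Prop :=
  ∀ ω ∈ M, ∀ x y : X, (R x y → R (ω x) (ω y)) ∧ (StrictRel R x y → StrictRel R (ω x) (ω y))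

/-- `R` is strongly `M`-coherent: coherent, and the converse implications also hold. -/
def StronglyCoherent {X : Type*} (M : Set (X → X)) (R : X → X → Prop) : Prop :=
  Coherent M R ∧
    ∀ ω ∈ M, ∀ x y : X, (R (ω x) (ω y) → R x y) ∧ (StrictRel R (ω x) (ω y) → StrictRel R x y)

/-- `R` is acyclic: there is no `k ≥ 2` and distinct `x₁, …, x_k` with
`x₁ ≽ x₂ ≽ … ≽ x_k` and `x_k ≻ x₁`.  (Indices here run from `0` to `k-1`.) -/
def Acyclic {X : Type*} (R : X → X → Prop) : Prop :=
  ¬ ∃ (k : ℕ) (x : ℕ → X), 2 ≤ k ∧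
      (∀ i j, i < k → j < k → x i = x j → i = j) ∧
      (∀ i, i + 1 < k → R (x i) (x (i + 1))) ∧
      StrictRel R (x (k - 1)) (x 0)

/-- `R'` is an extension of `R`. -/
def IsExtension {X : Type*} (R R' : X → X → Prop) : Prop :=
  (∀ x y, R x y → R' x y) ∧ (∀ x y, StrictRel R x y → StrictRel R' x y)

/-- A commutative family of transformations: nonempty, pairwise commuting, containing
the identity, and closed under composition. -/
def CommFamily {X : Type*} (M : Set (X → X)) : Prop :=
  M.Nonempty ∧ (∀ f ∈ M, ∀ g ∈ M, f ∘ g = g ∘ f) ∧ (id ∈ M) ∧ (∀ f ∈ M, ∀ g ∈ M, f ∘ g ∈ M)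



theorem chain_of_transGen {X : Type*} {R : X → X → Prop} {a b : X}
    (h : Relation.TransGen R a b) :
    ∃ n, 1 ≤ n ∧ ∃ z : ℕ → X, z 0 = a ∧ z n = b ∧ ∀ i, i < n → R (z i) (z (i + 1)) := by
  induction h with
  | @single c hab =>
    refine ⟨1, le_refl 1, fun m => if m = 0 then a else c, by simp, by simp, ?_⟩
    intro i hi
    interval_cases i
    simpa using hab
  | @tail p q hbc hcd ih =>
    obtain ⟨n, hn, z, hz0, hzn, hch⟩ := ih
    refine ⟨n + 1, by omega, fun m => if m ≤ n then z m else q, ?_, ?_, ?_⟩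
    · simp [hz0]
    · simp
    · intro i hi
      by_cases h1 : i + 1 ≤ n
      · simp only [if_pos (by omega : i ≤ n), if_pos h1]
        exact hch i (by omega)
      · have hin : i = n := by omega
        subst hin
        simpa [hzn] using hcd

/-- The transitive closure of `≽` is an extension of `≽` if and only if `≽` is acyclic. -/
theorem transClosure_extension_iff_acyclic {X : Type*} (R : X → X → Prop) :
    IsExtension R (Relation.TransGen R) ↔ Acyclic R := by
  classical
  constructor
  · rintro ⟨h1, h2⟩ ⟨k, x, hk, hinj, hch, hs⟩
    have hT : Relation.TransGen R (x 0) (x (k - 1)) := by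
      have key : ∀ m, m < k → 1 ≤ m → Relation.TransGen R (x 0) (x m) := by
        intro m
        induction m with
        | zero => omega
        | succ p ih =>
          intro hm _
          rcases Nat.eq_zero_or_pos p with hp | hp
          · subst hp; exact .single (hch 0 (by omega))
          · exact (ih (by omega) hp).tail (hch p (by omega))
      exact key (k - 1) (by omega) (by omega)
    exact (h2 _ _ hs).2 hT
  · intro hA
    refine ⟨fun x y h => .single h, fun x y hxy => ⟨.single hxy.1, ?_⟩⟩
    intro hT
    have hne : x ≠ y := by rintro rfl; exact hxy.2 hxy.1
    have hP : ∃ n, 1 ≤ n ∧ ∃ z : ℕ → X, z 0 = y ∧ z n = x ∧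
        ∀ i, i < n → R (z i) (z (i + 1)) := chain_of_transGen hT
    obtain ⟨hn1, z, hz0, hzn, hch⟩ := Nat.find_spec hP
    set n := Nat.find hP with hndef
    apply hA
    refine ⟨n + 1, z, by omega, ?_, ?_, ?_⟩
    · intro i j hi hj hij
      by_contra hne'
      wlog hlt : i < j generalizing i j
      · exact this j i hj hi hij.symm (Ne.symm hne') (by omega)
      have hjn : j ≤ n := by omega
      have hne0 : ¬(i = 0 ∧ j = n) := by
        rintro ⟨rfl, rfl⟩
        exact hne (by rw [← hzn, ← hz0, hij])
      set d := j - i with hd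
      have hd1 : 1 ≤ d := by omega
      have hlt' : n - d < n := by omega
      have hPd : 1 ≤ n - d ∧ ∃ w : ℕ → X, w 0 = y ∧ w (n - d) = x ∧
          ∀ m, m < n - d → R (w m) (w (m + 1)) := by
        refine ⟨by omega, fun m => if m ≤ i then z m else z (m + d), by simp [hz0], ?_, ?_⟩
        · by_cases hc : n - d ≤ i
          · have hie : n - d = i := by omega
            have hje : j = n := by omega
            simp only [hie, le_refl, if_pos]
            rw [hij, hje, hzn]
          · simp only [if_neg hc]
            have e : n - d + d = n := by omega
            rw [e, hzn]
        · intro m hm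
          by_cases h1 : m + 1 ≤ i
          · simp only [if_pos (by omega : m ≤ i), if_pos h1]
            exact hch m (by omega)
          · by_cases h2 : m ≤ i
            · have hmi : m = i := by omega
              simp only [if_pos h2, if_neg h1]
              rw [hmi, hij]
              have e : i + 1 + d = j + 1 := by omega
              rw [e]
              exact hch j (by omega)
            · simp only [if_neg h2, if_neg h1]
              have e : m + 1 + d = m + d + 1 := by omega
              rw [e]
              exact hch (m + d) (by omega)
      exact Nat.find_min hP hlt' hPd
    · intro i hi
      exact hch i (by omega)
    · simp only [Nat.add_sub_cancel, hzn, hz0]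
      exact hxy
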